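/- In W = (ℤ/2)^{n−1} ⋊ S_n (type D_n Weyl group, n even, n ≥ 4), let H = {(τ,ρ) : ρ(n)=n and τ=0} ∪ {(τ,ρ) : ρ(n)=i≠n and τ changes exactly the signs at positions i and n}. Then H is a subgroup of W of order n!, and no element (τ,ρ) ∈ W conjugates the subgroup S_n = {(0,ρ)} onto H. -/

import Mathlib

/-!
STATEMENT 18: In `W = (ℤ/2)^{n−1} ⋊ S_n` (the type `D_n` Weyl group of even sign
changes inside `(ℤ/2)^n ⋊ S_n`), with `n` even, `n ≥ 4`, let
`H = {(τ,ρ) : ρ(n) = n ∧ τ = 1} ∪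
     {(τ,ρ) : ρ(n) = i ≠ n ∧ τ changes exactly the signs at positions i and n}`.
Then `H` is a subgroup of `W` of order `n!`, and no element of `W` conjugates the
subgroup `S_n = {(1,ρ)}` onto `H`.
-/

open Pointwise

/-- The sign group `(ℤ/2)^n`, realized multiplicatively as `Fin n → ℤˣ`. -/
abbrev Signs (n : ℕ) := Fin n → ℤˣ

/-- A permutation of `Fin n` acts on `Signs n` by permuting the coordinates. -/
def permAutSigns {n : ℕ} (σ : Equiv.Perm (Fin n)) : MulAut (Signs n) where
  toFun v := v ∘ σ.symm
  invFun v := v ∘ σ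
  left_inv v := by funext i; simp
  right_inv v := by funext i; simp
  map_mul' v w := rfl

/-- The action of `S_n` on `(ℤ/2)^n` permuting coordinates, as a homomorphism. -/
def permHom (n : ℕ) : Equiv.Perm (Fin n) →* MulAut (Signs n) where
  toFun := permAutSigns
  map_one' := MulEquiv.ext fun v => rfl
  map_mul' σ τ := MulEquiv.ext fun v => rfl

/-- The hyperoctahedral group `W(B_n) = (ℤ/2)^n ⋊ S_n`. -/
abbrev WB (n : ℕ) := SemidirectProduct (Signs n) (Equiv.Perm (Fin n)) (permHom n)

/-- `W(B_n)` acts on `M^n` for any additive group `M` (e.g. the torus `(ℝ/ℤ)^n` or the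
Cartan subalgebra `k^n`) by permuting the coordinates and negating some of them. -/
instance WBAction {n : ℕ} {M : Type*} [AddCommGroup M] : MulAction (WB n) (Fin n → M) where
  smul w t := fun i => ((w.left i : ℤ)) • t (w.right⁻¹ i)
  one_smul t := by
    funext i
    show (((1 : WB n).left i : ℤ)) • t ((1 : WB n).right⁻¹ i) = t i
    simp
  mul_smul w w' t := by
    funext i
    show (((w * w').left i : ℤ)) • t ((w * w').right⁻¹ i)
      = ((w.left i : ℤ)) • ((w'.left (w.right⁻¹ i) : ℤ)) • t (w'.right⁻¹ (w.right⁻¹ i))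
    rw [SemidirectProduct.mul_left, SemidirectProduct.mul_right]
    simp [permHom, permAutSigns, mul_inv_rev, Units.val_mul, mul_smul, Equiv.Perm.inv_def]

/-- The product-of-signs character of `W(B_n)`. -/
def signProd (n : ℕ) : WB n →* ℤˣ where
  toFun w := ∏ i, w.left i
  map_one' := by simp
  map_mul' w w' := by
    show (∏ i, (w * w').left i) = _
    rw [SemidirectProduct.mul_left]
    show (∏ i, w.left i * w'.left (w.right.symm i)) = _
    rw [Finset.prod_mul_distrib]
    congr 1
    exact Equiv.prod_comp w.right.symm w'.left

/-- The Weyl group `W(D_n) = (ℤ/2)^{n-1} ⋊ S_n` of even sign changes. -/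
abbrev WD (n : ℕ) : Subgroup (WB n) := (signProd n).ker

/-- The subgroup `S_n ⊂ W(D_n)` of pure permutations (trivial sign change part). -/
def SnInWD (n : ℕ) : Subgroup (WD n) :=
  (SemidirectProduct.inr : Equiv.Perm (Fin n) →* WB n).range.subgroupOf (WD n)

/-
Let `δ ∈ W(B_n)` change the single sign at `lst`. Conjugation by `δ` maps `S_n` onto `H`, so `H`
is a subgroup of `W(D_n)` isomorphic to `S_n`. If some `g ∈ W(D_n)` conjugated `S_n` onto `H`, then
`δ⁻¹ g` would normalize `S_n`; but an element normalizing `S_n` has a constant sign vector, which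
for even `n` is an even sign change. Then `δ = g (δ⁻¹ g)⁻¹` would lie in `W(D_n)`, which it does not.
-/

lemma mulSingle_neg_one_mul_mulSingle {ι : Type*} [DecidableEq ι] (a b : ι) :
    (Pi.mulSingle a (-1) * Pi.mulSingle b (-1) : ι → ℤˣ) =
      if b = a then 1 else fun j => if j = a ∨ j = b then -1 else 1 := by
  split_ifs with hba
  · subst hba
    funext j
    by_cases hj : j = b <;> simp [hj]
  · funext j
    by_cases hja : j = a <;> by_cases hjb : j = b <;> simp_all

namespace WB

open SemidirectProduct

variable {n : ℕ}

lemma mul_left_apply (a b : WB n) (j : Fin n) : (a * b).left j = a.left j * b.left (a.right⁻¹ j) :=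
  rfl

lemma inv_left_apply (a : WB n) (j : Fin n) : a⁻¹.left j = (a.left (a.right j))⁻¹ :=
  rfl

lemma conj_inr_left_apply (h : WB n) (ρ : Equiv.Perm (Fin n)) (j : Fin n) :
    (h * inr ρ * h⁻¹).left j = h.left j * (h.left (h.right (ρ⁻¹ (h.right⁻¹ j))))⁻¹ := by
  rw [mul_left_apply, mul_left_apply, inv_left_apply]
  simp [mul_inv_rev]

def signFlip (i : Fin n) : WB n := inl (Pi.mulSingle i (-1))

lemma signProd_signFlip (i : Fin n) : signProd n (signFlip i) = -1 :=
  Fintype.prod_pi_mulSingle' i (-1)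

lemma inr_mem_WD (ρ : Equiv.Perm (Fin n)) : inr ρ ∈ WD n :=
  (signProd n).mem_ker.2 (Finset.prod_const_one : ∏ _i : Fin n, (1 : ℤˣ) = 1)

lemma signFlip_conj_inr_left (i : Fin n) (ρ : Equiv.Perm (Fin n)) :
    (signFlip i * inr ρ * (signFlip i)⁻¹).left =
      Pi.mulSingle i (-1) * Pi.mulSingle (ρ i) (-1) := by
  funext j
  rw [conj_inr_left_apply]
  simp [signFlip, Pi.mulSingle_apply, Equiv.eq_symm_apply, eq_comm]

def twistedPerm (i : Fin n) : Equiv.Perm (Fin n) →* WD n :=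
  ((MulAut.conj (signFlip i)).toMonoidHom.comp inr).codRestrict (WD n)
    fun ρ => (signProd n).normal_ker.conj_mem _ (inr_mem_WD ρ) _

lemma coe_twistedPerm (i : Fin n) (ρ : Equiv.Perm (Fin n)) :
    (twistedPerm i ρ : WB n) = signFlip i * inr ρ * (signFlip i)⁻¹ :=
  rfl

lemma twistedPerm_injective (i : Fin n) : Function.Injective (twistedPerm i) := by
  intro ρ σ h
  simpa [coe_twistedPerm] using congrArg (fun w : WD n => (w : WB n).right) h

lemma card_range_twistedPerm (i : Fin n) : Nat.card (twistedPerm i).range = n.factorial := by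
  rw [← Nat.card_congr (MonoidHom.ofInjective (twistedPerm_injective i)).toEquiv,
    Nat.card_perm, Nat.card_fin]

lemma mem_range_twistedPerm_iff (i : Fin n) (w : WD n) :
    w ∈ (twistedPerm i).range ↔
      (w : WB n).left = Pi.mulSingle i (-1) * Pi.mulSingle ((w : WB n).right i) (-1) := by
  constructor
  · rintro ⟨ρ, rfl⟩
    exact signFlip_conj_inr_left i ρ
  · intro hw
    refine ⟨(w : WB n).right, Subtype.ext (SemidirectProduct.ext ?_ rfl)⟩
    rw [coe_twistedPerm, signFlip_conj_inr_left, hw]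

lemma coe_range_twistedPerm (i : Fin n) :
    ((twistedPerm i).range : Set (WD n)) =
      {w : WD n |
        ((w : WB n).right i = i ∧ (w : WB n).left = 1) ∨
        ((w : WB n).right i ≠ i ∧
          (w : WB n).left = fun j => if j = i ∨ j = (w : WB n).right i then -1 else 1)} := by
  ext w
  rw [SetLike.mem_coe, mem_range_twistedPerm_iff, mulSingle_neg_one_mul_mulSingle]
  by_cases hw : (w : WB n).right i = i <;> simp [hw]

lemma left_const_of_conj_inr_mem {h : WB n}
    (hh : ∀ ρ, h * inr ρ * h⁻¹ ∈ (inr : Equiv.Perm (Fin n) →* WB n).range) (j k : Fin n) :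
    h.left j = h.left k := by
  -- `h` conjugates this permutation to the transposition of `j` and `k`.
  obtain ⟨σ, hσ⟩ := hh (h.right⁻¹ * Equiv.swap j k * h.right)
  have hk := congrFun (congrArg SemidirectProduct.left hσ) k
  rw [conj_inr_left_apply] at hk
  have hkj : h.left k * h.left j = 1 := by simpa [eq_comm] using hk
  rw [mul_eq_one_iff_eq_inv, Int.units_inv_eq_self] at hkj
  exact hkj.symm

lemma signProd_eq_one_of_left_const (hn : Even n) {w : WB n} (hw : ∀ j k, w.left j = w.left k) :
    signProd n w = 1 := by
  rcases isEmpty_or_nonempty (Fin n) with hempty | ⟨⟨j⟩⟩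
  · exact Fintype.prod_empty (fun k => w.left k)
  calc ∏ k, w.left k = ∏ _k : Fin n, w.left j := Fintype.prod_congr _ _ fun k => hw k j
    _ = w.left j ^ n := by rw [Finset.prod_const, Finset.card_univ, Fintype.card_fin]
    _ = 1 := by rw [Int.units_pow_eq_pow_mod_two, Nat.even_iff.1 hn, pow_zero]

lemma conj_inr_mem_of_smul_eq_range_twistedPerm {i : Fin n} {g : ConjAct (WD n)}
    (hg : g • SnInWD n = (twistedPerm i).range) (ρ : Equiv.Perm (Fin n)) :
    (signFlip i)⁻¹ * ((ConjAct.ofConjAct g : WD n) : WB n) * inr ρ *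
        ((signFlip i)⁻¹ * ((ConjAct.ofConjAct g : WD n) : WB n))⁻¹ ∈
      (inr : Equiv.Perm (Fin n) →* WB n).range := by
  have hk : (⟨inr ρ, inr_mem_WD ρ⟩ : WD n) ∈ SnInWD n := ⟨ρ, rfl⟩
  obtain ⟨σ, hσ⟩ : g • (⟨inr ρ, inr_mem_WD ρ⟩ : WD n) ∈ (twistedPerm i).range :=
    hg ▸ Subgroup.smul_mem_pointwise_smul _ _ _ hk
  replace hσ := congrArg Subtype.val hσ
  rw [coe_twistedPerm, ConjAct.smul_def] at hσ
  push_cast at hσ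
  refine ⟨σ, ?_⟩
  calc inr σ = (signFlip i)⁻¹ * (signFlip i * inr σ * (signFlip i)⁻¹) * signFlip i := by group
    _ = _ := by rw [hσ]; group

end WB

open WB in
theorem exists_subgroup_H_not_conjugate_to_Sn_general (n : ℕ) (hne : Even n) (lst : Fin n) :
    ∃ H : Subgroup (WD n),
      (H : Set (WD n)) =
        {w : WD n |
          ((w : WB n).right lst = lst ∧ (w : WB n).left = 1) ∨
          ((w : WB n).right lst ≠ lst ∧
            (w : WB n).left =
              fun j => if j = lst ∨ j = (w : WB n).right lst then -1 else 1)} ∧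
      Nat.card H = n.factorial ∧
      ∀ g : ConjAct (WD n), g • SnInWD n ≠ H := by
  refine ⟨(twistedPerm lst).range, coe_range_twistedPerm lst, card_range_twistedPerm lst, ?_⟩
  intro g hg
  have hh : signProd n ((signFlip lst)⁻¹ * ((ConjAct.ofConjAct g : WD n) : WB n)) = 1 :=
    signProd_eq_one_of_left_const hne
      (left_const_of_conj_inr_mem (conj_inr_mem_of_smul_eq_range_twistedPerm hg))
  rw [map_mul, map_inv, signProd_signFlip, MonoidHom.mem_ker.1 (ConjAct.ofConjAct g).2] at hh
  exact absurd hh (by decide)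

theorem exists_subgroup_H_not_conjugate_to_Sn (n : ℕ) (hn : 4 ≤ n) (hne : Even n)
    (lst : Fin n) (hlst : (lst : ℕ) = n - 1) :
    ∃ H : Subgroup (WD n),
      (H : Set (WD n)) =
        {w : WD n |
          ((w : WB n).right lst = lst ∧ (w : WB n).left = 1) ∨
          ((w : WB n).right lst ≠ lst ∧
            (w : WB n).left =
              fun j => if j = lst ∨ j = (w : WB n).right lst then -1 else 1)} ∧
      Nat.card H = n.factorial ∧
      ∀ g : ConjAct (WD n), g • SnInWD n ≠ H :=
  exists_subgroup_H_not_conjugate_to_Sn_general n hne lst
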